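/- The reduction system of the KLRW quiver is terminating and reduction-unique: there is no infinite sequence of one-step reductions starting from any path, and for every path w there is a unique irreducible path NF(w) reachable from w by a finite sequence of one-step reductions; equivalently, any two reduction sequences starting from the same path and ending at irreducible paths end at the same irreducible path. (This is the reduction-uniqueness underlying the k-linear isomorphism k·Irr_S(Q) ≅ kQ/I for the KLRW algebra.) -/

import Mathlib

/-- The arrows of the KLRW quiver on vertices `{0, …, n}`:
`p i : i → i+1` and `q i : i+1 → i` (for `0 ≤ i < n`), and loops `s i : i → i`.
(Here `p i` stands for the paper's `p_{i+1}` and `q i` for `q_i`.) -/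
inductive Arrow (n : ℕ) where
  | p (i : Fin n)
  | q (i : Fin n)
  | s (i : Fin (n + 1))
deriving DecidableEq

/-- `RedPair b a` holds when the two-letter word `b·a` (with `a` applied first) is one of
the reducible words `q_i p_{i+1}`, `p_i q_{i−1}`, `s_i p_i`, `s_i q_i` of the KLRW
reduction system.  Paths are written in word order (leftmost = last applied). -/
inductive RedPair {n : ℕ} : Arrow n → Arrow n → Prop where
  | qp (i : Fin n) : RedPair (.q i) (.p i)
  | pq (i : Fin n) : RedPair (.p i) (.q i)
  | sp (i : Fin n) : RedPair (.s i.succ) (.p i)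
  | sq (i : Fin n) : RedPair (.s i.castSucc) (.q i)

/-- A word is irreducible if no left-hand side of the reduction system occurs as a factor
of consecutive arrows. -/
def Irred {n : ℕ} (u : List (Arrow n)) : Prop :=
  List.Chain' (fun b a => ¬ RedPair b a) u

/-- One-step reduction of words (in word order): replace one occurrence of a left-hand
side of the reduction system `q_i p_{i+1} ⟶ s_i`, `p_i q_{i−1} ⟶ s_i`,
`s_i p_i ⟶ p_i s_{i−1}`, `s_i q_i ⟶ q_i s_{i+1}` by the corresponding right-hand side. -/
inductive Step {n : ℕ} : List (Arrow n) → List (Arrow n) → Prop where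
  | qp (L R : List (Arrow n)) (i : Fin n) :
      Step (L ++ [.q i, .p i] ++ R) (L ++ [.s i.castSucc] ++ R)
  | pq (L R : List (Arrow n)) (i : Fin n) :
      Step (L ++ [.p i, .q i] ++ R) (L ++ [.s i.succ] ++ R)
  | sp (L R : List (Arrow n)) (i : Fin n) :
      Step (L ++ [.s i.succ, .p i] ++ R) (L ++ [.p i, .s i.castSucc] ++ R)
  | sq (L R : List (Arrow n)) (i : Fin n) :
      Step (L ++ [.s i.castSucc, .q i] ++ R) (L ++ [.q i, .s i.succ] ++ R)

/-!
Termination: the rules `q p ⟶ s` and `p q ⟶ s` shorten a path, while `s p ⟶ p s` and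
`s q ⟶ q s` keep its length and move a loop past a non-loop arrow, so that
(length, number of loops standing left of a non-loop arrow) drops lexicographically.

Uniqueness: putting an arrow `a` in front of an irreducible path `t` and reducing
completely only rewrites at the front, which gives an explicit function `reduceCons a t`.
Folding it over a path yields an irreducible path reachable from it. Each rule `l ⟶ r`
becomes an identity between iterated `reduceCons` applied to irreducible paths, so this
normal form is invariant under reduction, hence equal to every irreducible path reachable.
-/

open Relation

section

variable {n : ℕ}

namespace Arrow

@[simp] def isLoop : Arrow n → Bool
  | .p _ => false
  | .q _ => false
  | .s _ => true

def reduceCons : Arrow n → List (Arrow n) → List (Arrow n)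
  | .q i, .p j :: t => if i = j then reduceCons (.s i.castSucc) t else .q i :: .p j :: t
  | .p i, .q j :: t => if i = j then reduceCons (.s i.succ) t else .p i :: .q j :: t
  | .s k, .p j :: t =>
    if k = j.succ then .p j :: reduceCons (.s j.castSucc) t else .s k :: .p j :: t
  | .s k, .q j :: t =>
    if k = j.castSucc then .q j :: reduceCons (.s j.succ) t else .s k :: .q j :: t
  | a, t => a :: t

end Arrow

open Arrow

lemma not_redPair_s (a : Arrow n) (k : Fin (n + 1)) : ¬ RedPair a (.s k) := by
  rintro ⟨⟩

lemma irred_cons {a : Arrow n} {t : List (Arrow n)} :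
    Irred (a :: t) ↔ (∀ b ∈ t.head?, ¬ RedPair a b) ∧ Irred t :=
  List.isChain_cons

def inversions : List (Arrow n) → ℕ
  | [] => 0
  | a :: t => (if a.isLoop then t.countP (! ·.isLoop) else 0) + inversions t

lemma inversions_append (u v : List (Arrow n)) :
    inversions (u ++ v) =
      inversions u + u.countP isLoop * v.countP (! ·.isLoop) + inversions v := by
  induction u with
  | nil => simp [inversions]
  | cons a u ih =>
    cases a <;> simp [inversions, ih, List.countP_cons]
    ring

lemma Step.lex_lt {u v : List (Arrow n)} (h : Step u v) :
    toLex (v.length, inversions v) < toLex (u.length, inversions u) := by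
  rw [Prod.Lex.toLex_lt_toLex]
  cases h <;> simp [inversions_append, inversions]

lemma wellFounded_flip_step : WellFounded (flip (@Step n)) :=
  Subrelation.wf (fun h => h.lex_lt) (InvImage.wf _ wellFounded_lt)

lemma Step.cons (c : Arrow n) {u v : List (Arrow n)} (h : Step u v) : Step (c :: u) (c :: v) := by
  cases h with
  | qp L R i => exact .qp (c :: L) R i
  | pq L R i => exact .pq (c :: L) R i
  | sp L R i => exact .sp (c :: L) R i
  | sq L R i => exact .sq (c :: L) R i

lemma reflTransGen_cons (c : Arrow n) {u v : List (Arrow n)} (h : ReflTransGen Step u v) :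
    ReflTransGen Step (c :: u) (c :: v) :=
  ReflTransGen.lift (c :: ·) (fun _ _ => Step.cons c) u v h

@[simp] lemma reduceCons_q_p (i : Fin n) (t : List (Arrow n)) :
    reduceCons (.q i) (.p i :: t) = reduceCons (.s i.castSucc) t := by simp [reduceCons]

@[simp] lemma reduceCons_p_q (i : Fin n) (t : List (Arrow n)) :
    reduceCons (.p i) (.q i :: t) = reduceCons (.s i.succ) t := by simp [reduceCons]

@[simp] lemma reduceCons_s_p (i : Fin n) (t : List (Arrow n)) :
    reduceCons (.s i.succ) (.p i :: t) = .p i :: reduceCons (.s i.castSucc) t := by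
  simp [reduceCons]

@[simp] lemma reduceCons_s_q (i : Fin n) (t : List (Arrow n)) :
    reduceCons (.s i.castSucc) (.q i :: t) = .q i :: reduceCons (.s i.succ) t := by
  simp [reduceCons]

lemma reduceCons_eq_cons {a : Arrow n} {t : List (Arrow n)}
    (h : ∀ b ∈ t.head?, ¬ RedPair a b) :
    reduceCons a t = a :: t := by
  rcases t with _ | ⟨b, t⟩
  · cases a <;> simp [reduceCons]
  · have hab : ¬ RedPair a b := h b rfl
    cases a <;> cases b <;> simp [reduceCons] <;> rintro rfl <;> exact absurd (by constructor) hab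

@[simp] lemma reduceCons_nil (a : Arrow n) : reduceCons a [] = [a] :=
  reduceCons_eq_cons (by simp)

lemma head?_reduceCons_s (k : Fin (n + 1)) (t : List (Arrow n)) :
    (reduceCons (.s k) t).head? = some (.s k) ∨ (reduceCons (.s k) t).head? = t.head? := by
  rcases t with _ | ⟨b, t⟩
  · simp [reduceCons]
  · cases b <;> simp [reduceCons] <;> split_ifs <;> simp

lemma not_redPair_head_reduceCons_s {c : Arrow n} {t : List (Arrow n)} (k : Fin (n + 1))
    (h : ∀ b ∈ t.head?, ¬ RedPair c b) :
    ∀ b ∈ (reduceCons (.s k) t).head?, ¬ RedPair c b := by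
  rcases head?_reduceCons_s k t with hk | ht
  · simp [hk, not_redPair_s]
  · rwa [ht]

lemma irred_reduceCons {t : List (Arrow n)} (ht : Irred t) (a : Arrow n) :
    Irred (reduceCons a t) := by
  induction t generalizing a with
  | nil => rw [reduceCons_nil]; exact List.isChain_singleton a
  | cons b t ih =>
    obtain ⟨hb, htail⟩ := irred_cons.1 ht
    by_cases hab : RedPair a b
    · rcases hab with i | i | i | i
      · simpa using ih htail _
      · simpa using ih htail _
      · simpa using irred_cons.2 ⟨not_redPair_head_reduceCons_s _ hb, ih htail _⟩
      · simpa using irred_cons.2 ⟨not_redPair_head_reduceCons_s _ hb, ih htail _⟩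
    · rw [reduceCons_eq_cons (by simpa using hab)]
      exact irred_cons.2 ⟨by simpa using hab, ht⟩

lemma reflTransGen_reduceCons (a : Arrow n) (t : List (Arrow n)) :
    ReflTransGen Step (a :: t) (reduceCons a t) := by
  induction t generalizing a with
  | nil => rw [reduceCons_nil]
  | cons b t ih =>
    by_cases hab : RedPair a b
    · rcases hab with i | i | i | i
      · simpa using .head (Step.qp [] t i) (ih _)
      · simpa using .head (Step.pq [] t i) (ih _)
      · simpa using .head (Step.sp [] t i) (reflTransGen_cons _ (ih _))
      · simpa using .head (Step.sq [] t i) (reflTransGen_cons _ (ih _))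
    · rw [reduceCons_eq_cons (by simpa using hab)]

lemma reduceCons_q_reduceCons_p {t : List (Arrow n)} (ht : Irred t) (i : Fin n) :
    reduceCons (.q i) (reduceCons (.p i) t) = reduceCons (.s i.castSucc) t := by
  rcases t with _ | ⟨b, t⟩
  · simp
  · obtain ⟨hb, -⟩ := irred_cons.1 ht
    cases b with
    | q j =>
      by_cases hij : i = j
      · subst hij
        simpa using reduceCons_eq_cons (not_redPair_head_reduceCons_s i.succ hb)
      · simp [reduceCons, hij]
    | _ => simp [reduceCons]

lemma reduceCons_p_reduceCons_q {t : List (Arrow n)} (ht : Irred t) (i : Fin n) :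
    reduceCons (.p i) (reduceCons (.q i) t) = reduceCons (.s i.succ) t := by
  rcases t with _ | ⟨b, t⟩
  · simp
  · obtain ⟨hb, -⟩ := irred_cons.1 ht
    cases b with
    | p j =>
      by_cases hij : i = j
      · subst hij
        simpa using reduceCons_eq_cons (not_redPair_head_reduceCons_s i.castSucc hb)
      · simp [reduceCons, hij]
    | _ => simp [reduceCons]

lemma reduceCons_s_reduceCons_p (i : Fin n) (t : List (Arrow n)) :
    reduceCons (.s i.succ) (reduceCons (.p i) t) =
      reduceCons (.p i) (reduceCons (.s i.castSucc) t) := by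
  rcases t with _ | ⟨b, t⟩
  · simp [reduceCons]
  · cases b with
    | p j =>
      have hp : ∀ b ∈ (Arrow.p j :: t).head?, ¬ RedPair (.p i) b := by rintro _ ⟨⟩ ⟨⟩
      rw [reduceCons_eq_cons hp, reduceCons_s_p,
        reduceCons_eq_cons (not_redPair_head_reduceCons_s i.castSucc hp)]
    | q j =>
      by_cases hij : i = j
      · subst hij; simp
      · simp [reduceCons, hij]
    | s k => simp [reduceCons]

lemma reduceCons_s_reduceCons_q (i : Fin n) (t : List (Arrow n)) :
    reduceCons (.s i.castSucc) (reduceCons (.q i) t) =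
      reduceCons (.q i) (reduceCons (.s i.succ) t) := by
  rcases t with _ | ⟨b, t⟩
  · simp [reduceCons]
  · cases b with
    | q j =>
      have hq : ∀ b ∈ (Arrow.q j :: t).head?, ¬ RedPair (.q i) b := by rintro _ ⟨⟩ ⟨⟩
      rw [reduceCons_eq_cons hq, reduceCons_s_q,
        reduceCons_eq_cons (not_redPair_head_reduceCons_s i.succ hq)]
    | p j =>
      by_cases hij : i = j
      · subst hij; simp
      · simp [reduceCons, hij]
    | s k => simp [reduceCons]

def normalForm (w : List (Arrow n)) : List (Arrow n) :=
  w.foldr reduceCons []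

lemma irred_normalForm (w : List (Arrow n)) : Irred (normalForm w) := by
  induction w with
  | nil => exact List.isChain_nil
  | cons a w ih => exact irred_reduceCons ih a

lemma reflTransGen_normalForm (w : List (Arrow n)) : ReflTransGen Step w (normalForm w) := by
  induction w with
  | nil => rfl
  | cons a w ih => exact (reflTransGen_cons a ih).trans (reflTransGen_reduceCons a _)

lemma Irred.normalForm_eq {w : List (Arrow n)} (hw : Irred w) : normalForm w = w := by
  induction w with
  | nil => rfl
  | cons a w ih =>
    obtain ⟨ha, hw⟩ := irred_cons.1 hw
    change reduceCons a (normalForm w) = a :: w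
    rw [ih hw, reduceCons_eq_cons ha]

lemma Step.normalForm_eq {u v : List (Arrow n)} (h : Step u v) : normalForm u = normalForm v := by
  cases h <;> simp only [normalForm, List.foldr_append, List.foldr_cons, List.foldr_nil] <;> congr 1
  · exact reduceCons_q_reduceCons_p (irred_normalForm _) _
  · exact reduceCons_p_reduceCons_q (irred_normalForm _) _
  · exact reduceCons_s_reduceCons_p _ _
  · exact reduceCons_s_reduceCons_q _ _

lemma normalForm_eq_of_reflTransGen {u v : List (Arrow n)} (h : ReflTransGen Step u v) :
    normalForm u = normalForm v := by
  induction h with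
  | refl => rfl
  | tail _ huv ih => exact ih.trans huv.normalForm_eq

end

/-- The KLRW reduction system is terminating and reduction-unique: there is no infinite
sequence of one-step reductions, and every word reaches a unique irreducible normal form
by finite sequences of one-step reductions.  (This underlies the `k`-linear isomorphism
`k·Irr_S(Q) ≅ kQ/I` for the KLRW algebra.) -/
theorem reduction_terminating_and_unique (n : ℕ) :
    (∀ f : ℕ → List (Arrow n), ∃ m : ℕ, ¬ Step (f m) (f (m + 1))) ∧
    (∀ u : List (Arrow n), ∃! v : List (Arrow n),
      Relation.ReflTransGen Step u v ∧ Irred v) := by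
  refine ⟨fun f => ?_, fun u =>
    ⟨normalForm u, ⟨reflTransGen_normalForm u, irred_normalForm u⟩, ?_⟩⟩
  · exact @WellFounded.not_rel_apply_succ _ _ ⟨wellFounded_flip_step⟩ f
  · rintro v ⟨huv, hv⟩
    rw [← hv.normalForm_eq, normalForm_eq_of_reflTransGen huv]
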